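/- For reals β, T > 0 and integers N ≥ 2, set θ_N = β(N+1)T/(N−1), R_N = N(N+1)·( ((βT+1/2)(N+1)+3)e^{2θ_N} − (2(N−1)/N²)(N e^{θ_N}+1/4) ) / (N((βT+1)(N+1)+2)e^{θ_N} − (N−1))², CoA(N,β,T) = (βT+2)·N·R_N − 1, and define the cost of predation CoP(N, β, T) = (βT+2)·( (N−1)/(N(βT+1)) + R_N ) − 1. Then: (i) CoP(N,β,T) = (N−1)(βT+2)/(N(βT+1)) − (N−1)/N + CoA(N,β,T)/N; (ii) CoP(N,β,T) > 0 for every integer N ≥ 2; (iii) for fixed β, T > 0, CoP(N,β,T) → 1/(1+βT) as N → ∞; (iv) for fixed integer N ≥ 2 and T > 0, CoP(N,β,T) → 0 as β → ∞ and CoP(N,β,T) → (N−1)/N as β → 0⁺. -/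

import Mathlib

open Filter Topology

/-- The coefficient `R_N` of `x̄²` in the per-trader equilibrium impact cost of the
block-cost model. -/
noncomputable def Rcoef (N : ℕ) (β T : ℝ) : ℝ :=
  (N : ℝ) * ((N : ℝ) + 1)
      * (((β * T + 1 / 2) * ((N : ℝ) + 1) + 3)
          * Real.exp (2 * (β * ((N : ℝ) + 1) * T / ((N : ℝ) - 1)))
        - 2 * ((N : ℝ) - 1) / (N : ℝ) ^ 2
          * ((N : ℝ) * Real.exp (β * ((N : ℝ) + 1) * T / ((N : ℝ) - 1)) + 1 / 4)) /
    ((N : ℝ) * ((β * T + 1) * ((N : ℝ) + 1) + 2)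
        * Real.exp (β * ((N : ℝ) + 1) * T / ((N : ℝ) - 1)) - ((N : ℝ) - 1)) ^ 2

/-- The cost of anarchy `CoA(N,β,T) = (βT+2)·N·R_N − 1`. -/
noncomputable def CoA (N : ℕ) (β T : ℝ) : ℝ :=
  (β * T + 2) * (N : ℝ) * Rcoef N β T - 1

/-- The cost of predation `CoP(N,β,T) = (βT+2)·((N−1)/(N(βT+1)) + R_N) − 1`. -/
noncomputable def CoP (N : ℕ) (β T : ℝ) : ℝ :=
  (β * T + 2) * (((N : ℝ) - 1) / ((N : ℝ) * (β * T + 1)) + Rcoef N β T) - 1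

private lemma core_lower (n a E : ℝ) (hn : 2 ≤ n) (ha : 0 < a) (hE : 1 < E) :
    (n*((a+1)*(n+1)+2)*E - (n-1))^2
      < (a+2) * (n^2*(n+1)*((a+1/2)*(n+1)+3)*(E*E) - 2*(n^2-1)*(n*E+1/4)) := by
  have h1 : (0:ℝ) < n - 1 := by linarith
  have hA : 0 < n^2*(n-1)*(a*(n+1)/2+2) := by positivity
  have key : 0 ≤ (E-1)*(n^2*(n-1)*(a*(n+1)/2+2)*(E+1) - 2*n*(n-1)^2) := by
    apply mul_nonneg (by linarith)
    nlinarith [hA, mul_pos ha h1, mul_pos (mul_pos h1 h1) ha]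
  have hn2 : (0:ℝ) < n^2 - 1 := by nlinarith
  have hpos : 0 < a*(n^2-1)^2/2 := by positivity
  nlinarith [key, hpos]

private lemma core_upper (n a E : ℝ) (hn : 2 ≤ n) (ha : 0 < a) (hE : 1 < E) :
    (a+1) * (n^2*(n+1)*((a+1/2)*(n+1)+3)*(E*E) - 2*(n^2-1)*(n*E+1/4))
      ≤ (n*((a+1)*(n+1)+2)*E - (n-1))^2 := by
  have h1 : (0:ℝ) < n - 1 := by linarith
  have key : (E-1)*(n^2*(((a+1)*(n+1)+2)*(n+3)/2 - (n-1))*(E+1) - 4*n*(n-1)) ≥ 0 := by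
    apply mul_nonneg (by linarith)
    have hb : (0:ℝ) < ((a+1)*(n+1)+2)*(n+3)/2 - (n-1) := by nlinarith [mul_pos ha h1]
    nlinarith [hb, mul_nonneg (by linarith : (0:ℝ) ≤ E - 1) hb.le, sq_nonneg n,
      mul_pos h1 h1, mul_pos ha h1]
  nlinarith [key, mul_pos ha h1, sq_nonneg (n-1), mul_nonneg ha.le (sq_nonneg (n-1)),
    mul_nonneg (mul_nonneg ha.le h1.le) h1.le]

private lemma Rcoef_bounds (N : ℕ) (hN : 2 ≤ N) (β T : ℝ) (hβ : 0 < β) (hT : 0 < T) :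
    1/((N:ℝ)*(β*T+2)) < Rcoef N β T ∧ Rcoef N β T ≤ 1/((N:ℝ)*(β*T+1)) := by
  have hn2 : (2:ℝ) ≤ (N:ℝ) := by exact_mod_cast hN
  set n : ℝ := (N:ℝ) with hn
  have hn1 : (0:ℝ) < n - 1 := by linarith
  have hn0 : (0:ℝ) < n := by linarith
  have hθ : 0 < β*(n+1)*T/(n-1) := by positivity
  set E : ℝ := Real.exp (β*(n+1)*T/(n-1)) with hEdef
  have hE1 : 1 < E := Real.one_lt_exp_iff.mpr hθ
  have ha : 0 < β*T := by positivity
  have hcpos : (0:ℝ) < (β*T+1)*(n+1)+2 := by nlinarith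
  have hden : 0 < n*((β*T+1)*(n+1)+2)*E - (n-1) := by
    have h2 : (0:ℝ) < ((β*T+1)*(n+1)+2)*E - 1 := by
      nlinarith [mul_nonneg hcpos.le (by linarith : (0:ℝ) ≤ E - 1)]
    nlinarith [mul_pos hn0 h2]
  have hEE : Real.exp (2 * (β*(n+1)*T/(n-1))) = E*E := by
    rw [two_mul, Real.exp_add]
  have hco := core_lower n (β*T) E hn2 ha hE1
  have hcu := core_upper n (β*T) E hn2 ha hE1
  have hR : Rcoef N β T = (n^2*(n+1)*((β*T+1/2)*(n+1)+3)*(E*E) - 2*(n^2-1)*(n*E+1/4))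
      / (n * (n*((β*T+1)*(n+1)+2)*E - (n-1))^2) := by
    rw [Rcoef, hEE, ← hn, ← hEdef]
    rw [div_eq_div_iff (by positivity) (by positivity)]
    field_simp
    ring
  constructor
  · rw [hR, div_lt_div_iff₀ (by positivity) (by positivity)]
    have := mul_lt_mul_of_pos_left hco hn0
    linarith
  · rw [hR, div_le_div_iff₀ (by positivity) (by positivity)]
    have := mul_le_mul_of_nonneg_left hcu hn0.le
    linarith

/-- Auxiliary rational function giving `CoP` in the variables `s = 1/(βT+1)`,
`u = exp(−θ_N)`. -/
noncomputable def Phi (N : ℕ) (s u : ℝ) : ℝ :=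
  (1+s)*((N:ℝ)-1)/(N:ℝ)
  + (1+s)*(N:ℝ)*((N:ℝ)+1)*((1-s/2)*((N:ℝ)+1)+3*s
        - 2*((N:ℝ)-1)/(N:ℝ)^2*((N:ℝ)*s*u + s*u^2/4))
      / ((N:ℝ)*((N:ℝ)+1) + 2*(N:ℝ)*s - ((N:ℝ)-1)*u*s)^2
  - 1

private lemma CoP_eq_Phi (N : ℕ) (hN : 2 ≤ N) (β T : ℝ) (hβ : 0 < β) (hT : 0 < T) :
    CoP N β T = Phi N (1/(β*T+1)) (Real.exp (-(β*((N:ℝ)+1)*T/((N:ℝ)-1)))) := by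
  have hn2 : (2:ℝ) ≤ (N:ℝ) := by exact_mod_cast hN
  set n : ℝ := (N:ℝ) with hn
  have hn1 : (0:ℝ) < n - 1 := by linarith
  have hn0 : (0:ℝ) < n := by linarith
  have hθ : 0 < β*(n+1)*T/(n-1) := by positivity
  set E : ℝ := Real.exp (β*(n+1)*T/(n-1)) with hEdef
  have hE1 : 1 < E := Real.one_lt_exp_iff.mpr hθ
  have ha : 0 < β*T := by positivity
  have hs1 : (0:ℝ) < β * T + 1 := by linarith
  have hEE : Real.exp (2 * (β*(n+1)*T/(n-1))) = E*E := by rw [two_mul, Real.exp_add]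
  have hden : 0 < n*((β*T+1)*(n+1)+2)*E - (n-1) := by
    have h2 : (0:ℝ) < ((β*T+1)*(n+1)+2)*E - 1 := by
      nlinarith [mul_nonneg (by nlinarith : (0:ℝ) ≤ (β*T+1)*(n+1)+2)
        (by linarith : (0:ℝ) ≤ E - 1)]
    nlinarith [mul_pos hn0 h2]
  have hE0 : E ≠ 0 := by positivity
  have hn0' : n ≠ 0 := hn0.ne'
  have hsne : β*T+1 ≠ 0 := hs1.ne'
  rw [CoP, Rcoef, Phi, Real.exp_neg, hEE, ← hn, ← hEdef]
  set s : ℝ := 1/(β*T+1) with hs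
  set u : ℝ := E⁻¹ with hu
  have e1 : (1 - s / 2) * (n + 1) + 3 * s - 2 * (n - 1) / n ^ 2 * (n * s * u + s * u ^ 2 / 4)
      = s*(u^2*(((β*T+1/2)*(n+1)+3)*(E*E) - 2*(n-1)/n^2*(n*E+1/4))) := by
    rw [hs, hu]; field_simp; ring
  have e2 : n * (n + 1) + 2 * n * s - (n - 1) * u * s
      = s*(u*(n*((β*T+1)*(n+1)+2)*E - (n-1))) := by
    rw [hs, hu]; field_simp
  have e3 : ∀ x y : ℝ, y ≠ 0 →
      (1+s)*n*(n+1)*(s*(u^2*x))/(s*(u*y))^2 = (β*T+2)*(n*(n+1)*x/y^2) := by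
    intro x y hy; rw [hs, hu]; field_simp; ring
  have e4 : (1+s)*(n-1)/n = (β*T+2)*((n-1)/(n*(β*T+1))) := by
    rw [hs]; field_simp; ring
  rw [e1, e2, e3 _ _ hden.ne', e4]
  ring

private lemma tendsto_Phi {α : Type*} {l : Filter α} (N : ℕ) {sf uf : α → ℝ} {s0 u0 : ℝ}
    (hs : Tendsto sf l (𝓝 s0)) (hu : Tendsto uf l (𝓝 u0)) (hn : (N:ℝ) ≠ 0)
    (hd : (N:ℝ)*((N:ℝ)+1) + 2*(N:ℝ)*s0 - ((N:ℝ)-1)*u0*s0 ≠ 0) :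
    Tendsto (fun x => Phi N (sf x) (uf x)) l (𝓝 (Phi N s0 u0)) := by
  unfold Phi
  apply Tendsto.sub _ tendsto_const_nhds
  apply Tendsto.add
  · exact ((tendsto_const_nhds.add hs).mul tendsto_const_nhds).div tendsto_const_nhds hn
  · apply Tendsto.div
    · exact ((((tendsto_const_nhds.add hs).mul tendsto_const_nhds).mul tendsto_const_nhds).mul
        ((((tendsto_const_nhds.sub (hs.div_const 2)).mul tendsto_const_nhds).add
            (tendsto_const_nhds.mul hs)).sub
          (tendsto_const_nhds.mul (((tendsto_const_nhds.mul hs).mul hu).add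
            ((hs.mul (hu.pow 2)).div_const 4)))))
    · exact ((tendsto_const_nhds.add (tendsto_const_nhds.mul hs)).sub
        ((tendsto_const_nhds.mul hu).mul hs)).pow 2
    · exact pow_ne_zero 2 hd

private lemma Phi_zero (N : ℕ) (hN : 2 ≤ N) : Phi N 0 0 = 0 := by
  have hn2 : (2:ℝ) ≤ (N:ℝ) := by exact_mod_cast hN
  have hn0 : (N:ℝ) ≠ 0 := by linarith
  have hn1 : (N:ℝ)+1 ≠ 0 := by linarith
  rw [Phi]
  field_simp
  ring

private lemma Phi_one (N : ℕ) (hN : 2 ≤ N) : Phi N 1 1 = ((N:ℝ)-1)/(N:ℝ) := by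
  have hn2 : (2:ℝ) ≤ (N:ℝ) := by exact_mod_cast hN
  have hn0 : (N:ℝ) ≠ 0 := by linarith
  have hn1 : (N:ℝ)+1 ≠ 0 := by linarith
  have hdd : (N:ℝ)*((N:ℝ)+1) + 2*(N:ℝ)*1 - ((N:ℝ)-1)*1*1 = ((N:ℝ)+1)^2 := by ring
  rw [Phi, hdd]
  field_simp
  ring

/-- Properties of the cost of predation: (i) the decomposition
`CoP = (N−1)(βT+2)/(N(βT+1)) − (N−1)/N + CoA/N`; (ii) positivity `CoP > 0` for `N ≥ 2`;
(iii) for fixed `β, T > 0`, `CoP → 1/(1+βT)` as `N → ∞`; (iv) for fixed `N ≥ 2` and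
`T > 0`, `CoP → 0` as `β → ∞` and `CoP → (N−1)/N` as `β → 0⁺`. -/
theorem CoP_properties :
    (∀ N : ℕ, 2 ≤ N → ∀ β T : ℝ, 0 < β → 0 < T →
      CoP N β T = ((N : ℝ) - 1) * (β * T + 2) / ((N : ℝ) * (β * T + 1))
        - ((N : ℝ) - 1) / (N : ℝ) + CoA N β T / (N : ℝ)) ∧
    (∀ N : ℕ, 2 ≤ N → ∀ β T : ℝ, 0 < β → 0 < T → 0 < CoP N β T) ∧
    (∀ β T : ℝ, 0 < β → 0 < T →
      Tendsto (fun N : ℕ => CoP N β T) atTop (𝓝 (1 / (1 + β * T)))) ∧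
    (∀ N : ℕ, 2 ≤ N → ∀ T : ℝ, 0 < T →
      Tendsto (fun β : ℝ => CoP N β T) atTop (𝓝 0) ∧
      Tendsto (fun β : ℝ => CoP N β T) (𝓝[>] 0) (𝓝 (((N : ℝ) - 1) / (N : ℝ)))) := by
  refine ⟨?_, ?_, ?_, ?_⟩
  · -- (i) decomposition
    intro N hN β T hβ hT
    have hn2 : (2:ℝ) ≤ (N:ℝ) := by exact_mod_cast hN
    have hn0 : (N:ℝ) ≠ 0 := by linarith
    have h1 : β*T+1 ≠ 0 := by nlinarith
    rw [CoP, CoA]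
    field_simp
    ring
  · -- (ii) positivity
    intro N hN β T hβ hT
    have hn2 : (2:ℝ) ≤ (N:ℝ) := by exact_mod_cast hN
    have hn1 : (0:ℝ) < (N:ℝ) - 1 := by linarith
    have hn0 : (0:ℝ) < (N:ℝ) := by linarith
    have ha : 0 < β*T := by positivity
    have hlow := (Rcoef_bounds N hN β T hβ hT).1
    rw [CoP]
    have key : (β*T+2)*(((N:ℝ)-1)/((N:ℝ)*(β*T+1)) + 1/((N:ℝ)*(β*T+2))) - 1
        = ((N:ℝ)-1)/((N:ℝ)*(β*T+1)) := by
      have h1 : β*T+1 ≠ 0 := by nlinarith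
      have h2 : β*T+2 ≠ 0 := by nlinarith
      field_simp
      ring
    have h2 : (β*T+2)*(((N:ℝ)-1)/((N:ℝ)*(β*T+1)) + 1/((N:ℝ)*(β*T+2)))
        < (β*T+2)*(((N:ℝ)-1)/((N:ℝ)*(β*T+1)) + Rcoef N β T) :=
      mul_lt_mul_of_pos_left (by linarith) (by linarith)
    have h3 : 0 < ((N:ℝ)-1)/((N:ℝ)*(β*T+1)) := by positivity
    linarith
  · -- (iii) limit in N
    intro β T hβ hT
    have ha : 0 < β*T := by positivity
    have hinv : Tendsto (fun N:ℕ => ((N:ℝ))⁻¹) atTop (𝓝 0) :=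
      tendsto_inv_atTop_zero.comp tendsto_natCast_atTop_atTop
    have hA : Tendsto (fun N:ℕ => ((N:ℝ)-1)/((N:ℝ)*(β*T+1))) atTop (𝓝 ((β*T+1)⁻¹)) := by
      have h0 : Tendsto (fun N:ℕ => (1 - ((N:ℝ))⁻¹)*(β*T+1)⁻¹) atTop
          (𝓝 ((1-0)*(β*T+1)⁻¹)) := (tendsto_const_nhds.sub hinv).mul tendsto_const_nhds
      rw [show ((1:ℝ)-0)*(β*T+1)⁻¹ = (β*T+1)⁻¹ by ring] at h0
      refine h0.congr' ?_
      filter_upwards [eventually_ge_atTop 1] with N hN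
      have hn0 : (N:ℝ) ≠ 0 := by
        have : (1:ℝ) ≤ (N:ℝ) := by exact_mod_cast hN
        linarith
      have h1 : β*T+1 ≠ 0 := by nlinarith
      field_simp
    have hR0 : Tendsto (fun N:ℕ => Rcoef N β T) atTop (𝓝 0) := by
      apply squeeze_zero' ?_ ?_ hinv
      · filter_upwards [eventually_ge_atTop 2] with N hN
        have h := (Rcoef_bounds N hN β T hβ hT).1
        have hn0 : (0:ℝ) < (N:ℝ) := by
          have : (2:ℝ) ≤ (N:ℝ) := by exact_mod_cast hN
          linarith
        have : 0 < 1/((N:ℝ)*(β*T+2)) := by positivity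
        linarith
      · filter_upwards [eventually_ge_atTop 2] with N hN
        have h := (Rcoef_bounds N hN β T hβ hT).2
        have hn0 : (0:ℝ) < (N:ℝ) := by
          have : (2:ℝ) ≤ (N:ℝ) := by exact_mod_cast hN
          linarith
        have h2 : 1/((N:ℝ)*(β*T+1)) ≤ 1/((N:ℝ)*1) := by
          apply one_div_le_one_div_of_le (by linarith)
          nlinarith
        calc Rcoef N β T ≤ 1/((N:ℝ)*(β*T+1)) := h
          _ ≤ 1/((N:ℝ)*1) := h2
          _ = ((N:ℝ))⁻¹ := by rw [mul_one, one_div]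
    have hfull : Tendsto (fun N:ℕ => (β*T+2)*(((N:ℝ)-1)/((N:ℝ)*(β*T+1)) + Rcoef N β T) - 1)
        atTop (𝓝 ((β*T+2)*((β*T+1)⁻¹+0) - 1)) :=
      (tendsto_const_nhds.mul (hA.add hR0)).sub tendsto_const_nhds
    have hL : (β*T+2)*((β*T+1)⁻¹+0) - 1 = 1/(1+β*T) := by
      have h1 : β*T+1 ≠ 0 := by nlinarith
      have h2 : 1+β*T ≠ 0 := by nlinarith
      field_simp
      ring
    rw [hL] at hfull
    simpa only [CoP] using hfull
  · -- (iv) limits in β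
    intro N hN T hT
    have hn2 : (2:ℝ) ≤ (N:ℝ) := by exact_mod_cast hN
    have hn0 : ((N:ℝ)) ≠ 0 := by linarith
    have hn1 : (0:ℝ) < (N:ℝ) - 1 := by linarith
    constructor
    · -- β → ∞
      have hs : Tendsto (fun β:ℝ => 1/(β*T+1)) atTop (𝓝 0) := by
        have h1 : Tendsto (fun β:ℝ => β*T+1) atTop atTop :=
          tendsto_atTop_add_const_right _ 1 (Tendsto.atTop_mul_const hT tendsto_id)
        simpa only [one_div, Function.comp_def] using tendsto_inv_atTop_zero.comp h1
      have hu : Tendsto (fun β:ℝ => Real.exp (-(β*((N:ℝ)+1)*T/((N:ℝ)-1)))) atTop (𝓝 0) := by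
        apply Real.tendsto_exp_atBot.comp
        apply tendsto_neg_atTop_atBot.comp
        have hc : 0 < ((N:ℝ)+1)*T/((N:ℝ)-1) := by positivity
        have h2 : Tendsto (fun β:ℝ => β*(((N:ℝ)+1)*T/((N:ℝ)-1))) atTop atTop :=
          Tendsto.atTop_mul_const hc tendsto_id
        refine h2.congr fun β => ?_
        field_simp
      have hph := tendsto_Phi N hs hu hn0
        (by nlinarith [hn2])
      rw [Phi_zero N hN] at hph
      refine hph.congr' ?_
      filter_upwards [eventually_gt_atTop (0:ℝ)] with β hβ
      exact (CoP_eq_Phi N hN β T hβ hT).symm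
    · -- β → 0⁺
      have hs : Tendsto (fun β:ℝ => 1/(β*T+1)) (𝓝[>] (0:ℝ)) (𝓝 1) := by
        have hcont : ContinuousAt (fun β:ℝ => 1/(β*T+1)) 0 := by
          apply ContinuousAt.div continuousAt_const
          · exact (continuousAt_id.mul continuousAt_const).add continuousAt_const
          · norm_num
        have h2 := hcont.tendsto.mono_left (nhdsWithin_le_nhds (s := Set.Ioi (0:ℝ)))
        simpa using h2
      have hu : Tendsto (fun β:ℝ => Real.exp (-(β*((N:ℝ)+1)*T/((N:ℝ)-1)))) (𝓝[>] (0:ℝ))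
          (𝓝 1) := by
        have hcont : ContinuousAt (fun β:ℝ => Real.exp (-(β*((N:ℝ)+1)*T/((N:ℝ)-1)))) 0 := by
          apply Real.continuous_exp.continuousAt.comp
          apply ContinuousAt.neg
          apply ContinuousAt.div _ continuousAt_const (by linarith)
          exact (continuousAt_id.mul continuousAt_const).mul continuousAt_const
        have h2 := hcont.tendsto.mono_left (nhdsWithin_le_nhds (s := Set.Ioi (0:ℝ)))
        simpa using h2
      have hd : ((N:ℝ))*((N:ℝ)+1) + 2*((N:ℝ))*1 - ((N:ℝ)-1)*1*1 ≠ 0 := by nlinarith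
      have hph := tendsto_Phi N hs hu hn0 hd
      rw [Phi_one N hN] at hph
      refine hph.congr' ?_
      filter_upwards [self_mem_nhdsWithin] with β hβ
      exact (CoP_eq_Phi N hN β T hβ hT).symm
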